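/- arXiv:2104.10196 — 2 statements merged into one kernel-verified Lean document; each statement's English description precedes it below -/
import Mathlib

section
/- Let f : ℝⁿ → ℝ be convex and (L,η)-Hölder smooth with L > 0 and η ∈ (0,1]. Then for every x ∈ ℝⁿ, every g ∈ ∂f(x), and every g' ∈ ℝⁿ, the Fenchel conjugate satisfies f*(g') ≥ f*(g) + ⟨x, g' − g⟩ + (η/((η+1)L^{1/η}))‖g' − g‖^{(η+1)/η}, where f*(g) = ⟨g, x⟩ − f(x) is finite. -/
noncomputable section

/-- Subdifferential of `f` at `x`. -/
def SubdiffAt {n : ℕ} (f : EuclideanSpace ℝ (Fin n) → ℝ) (x : EuclideanSpace ℝ (Fin n)) :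
    Set (EuclideanSpace ℝ (Fin n)) :=
  {g | ∀ y, f x + (inner ℝ g (y - x) : ℝ) ≤ f y}

/-- `(L,η)`-Hölder smoothness of `f`. -/
def HolderSmooth {n : ℕ} (L η : ℝ) (f : EuclideanSpace ℝ (Fin n) → ℝ) : Prop :=
  ∀ x x' g g', g ∈ SubdiffAt f x → g' ∈ SubdiffAt f x' → ‖g - g'‖ ≤ L * ‖x - x'‖ ^ η

/-- The stepsize `γ = ‖g‖^((1-η)/η)/L^(1/η)` if `η > 0`, else `0`. -/
def gammaStep {n : ℕ} (L η : ℝ) (g : EuclideanSpace ℝ (Fin n)) : ℝ :=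
  if 0 < η then ‖g‖ ^ ((1 - η) / η) / L ^ (1 / η) else 0

/-- The Hölder-smooth upper model `h_k` anchored at `c` with value `fc` and slope `g`. -/
def hModel {n : ℕ} (L η : ℝ) (c g : EuclideanSpace ℝ (Fin n)) (fc : ℝ)
    (y : EuclideanSpace ℝ (Fin n)) : ℝ :=
  fc + (inner ℝ g (y - c) : ℝ) + (L / (η + 1)) * ‖y - c‖ ^ (η + 1)

/-- `m(y) = min{h_k(y) : k ∈ {0,…,T,*}}` with `g_* = 0`. -/
def auxMin {n : ℕ} (L η : ℝ) (T : ℕ) (x g : ℕ → EuclideanSpace ℝ (Fin n))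
    (f : EuclideanSpace ℝ (Fin n) → ℝ) (xs : EuclideanSpace ℝ (Fin n))
    (y : EuclideanSpace ℝ (Fin n)) : ℝ :=
  min ((Finset.range (T + 1)).inf' (by simp) fun k => hModel L η (x k) (g k) (f (x k)) y)
      (hModel L η xs 0 (f xs) y)

/-- Convex envelope: pointwise supremum of all affine minorants of `m`. -/
def convEnvelope {n : ℕ} (m : EuclideanSpace ℝ (Fin n) → ℝ)
    (x : EuclideanSpace ℝ (Fin n)) : ℝ :=
  sSup {v | ∃ (g : EuclideanSpace ℝ (Fin n)) (b : ℝ),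
    (∀ y, (inner ℝ g y : ℝ) + b ≤ m y) ∧ v = (inner ℝ g x : ℝ) + b}

/-- The Fenchel conjugate of `f`, valued in `EReal`. -/
def fenchel {n : ℕ} (f : EuclideanSpace ℝ (Fin n) → ℝ) (g : EuclideanSpace ℝ (Fin n)) : EReal :=
  ⨆ z, (((inner ℝ g z : ℝ) - f z : ℝ) : EReal)


/- Along the segment `t ↦ x + t • (y - x)`, a subgradient at the later point `x + z • (y - x)`
bounds the slope of `f` from above, and Hölder smoothness compares it with `g`: the right slope
at `t` is at most `⟪g, y - x⟫ + L t ^ η ‖y - x‖ ^ (η + 1)`, the derivative of the Hölder upper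
model. A comparison argument on `[0, 1]` then gives the descent inequality
`f y ≤ f x + ⟪g, y - x⟫ + L / (η + 1) ‖y - x‖ ^ (η + 1)` (subgradients at intermediate points exist
by separating the strict epigraph from a point of the graph). Inserting `y = x + v` into the
supremum defining `f* g'` leaves `⟪g' - g, v⟫ - L / (η + 1) ‖v‖ ^ (η + 1)`, whose maximum over
`v` is the conjugate of the Hölder model, `η / ((η + 1) L ^ (1 / η)) ‖g' - g‖ ^ ((η + 1) / η)`. -/

open Set Filter RealInnerProductSpace

theorem ConvexOn.exists_strongDual_add_le {E : Type*} [NormedAddCommGroup E] [NormedSpace ℝ E]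
    {f : E → ℝ} (hf : ConvexOn ℝ univ f) (hcont : Continuous f) (z : E) :
    ∃ ℓ : StrongDual ℝ E, ∀ y, f z + ℓ (y - z) ≤ f y := by
  have hopen : IsOpen {p : E × ℝ | f p.1 < p.2} := isOpen_lt (by fun_prop) continuous_snd
  obtain ⟨ℓ, hℓ⟩ := geometric_hahn_banach_open_point (by simpa using hf.convex_strict_epigraph)
    hopen (x := (z, f z)) (lt_irrefl (f z))
  set c := ℓ (0, 1)
  have hsplit : ∀ y t, ℓ (y, t) = ℓ (y, 0) + t * c := fun y t => by
    rw [show (y, t) = (y, 0) + t • ((0 : E), (1 : ℝ)) by simp, map_add, map_smul, smul_eq_mul]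
  have hc : c < 0 := by
    have := hℓ (z, f z + 1) (by simp)
    rw [hsplit z (f z + 1), hsplit z (f z)] at this
    linarith
  have hle : ∀ y, ℓ (y, f y) ≤ ℓ (z, f z) := fun y =>
    (isClosed_le (f := fun t => ℓ (y, t)) (by fun_prop) continuous_const).closure_subset_iff.2
      (fun t ht => (hℓ (y, t) ht).le) (by simp : f y ∈ closure (Ioi (f y)))
  refine ⟨(-c)⁻¹ • ℓ.comp (ContinuousLinearMap.inl ℝ E ℝ), fun y => ?_⟩
  have hy := hle y
  rw [hsplit y, hsplit z] at hy
  have hsub : ℓ (y - z, 0) = ℓ (y, 0) - ℓ (z, 0) := by rw [← map_sub, Prod.mk_sub_mk, sub_zero]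
  have : (-c)⁻¹ * (ℓ (y, 0) - ℓ (z, 0)) ≤ f y - f z := by
    rw [inv_mul_le_iff₀ (neg_pos.2 hc)]
    nlinarith
  simp only [smul_apply, ContinuousLinearMap.comp_apply, ContinuousLinearMap.inl_apply,
    smul_eq_mul, hsub]
  linarith

theorem subdiffAt_nonempty {n : ℕ} {f : EuclideanSpace ℝ (Fin n) → ℝ}
    (hf : ConvexOn ℝ univ f) (x : EuclideanSpace ℝ (Fin n)) : (SubdiffAt f x).Nonempty := by
  obtain ⟨ℓ, hℓ⟩ := hf.exists_strongDual_add_le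
    (continuousOn_univ.1 (hf.continuousOn isOpen_univ)) x
  exact ⟨(InnerProductSpace.toDual ℝ _).symm ℓ, fun y => by
    rw [InnerProductSpace.toDual_symm_apply]; exact hℓ y⟩

theorem coe_sub_le_fenchel {n : ℕ} (f : EuclideanSpace ℝ (Fin n) → ℝ)
    (g z : EuclideanSpace ℝ (Fin n)) : ((⟪g, z⟫ - f z : ℝ) : EReal) ≤ fenchel f g :=
  le_iSup (fun z => ((⟪g, z⟫ - f z : ℝ) : EReal)) z

theorem fenchel_eq_of_mem_subdiffAt {n : ℕ} {f : EuclideanSpace ℝ (Fin n) → ℝ}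
    {x g : EuclideanSpace ℝ (Fin n)} (hg : g ∈ SubdiffAt f x) :
    fenchel f g = ((⟪g, x⟫ - f x : ℝ) : EReal) := by
  refine le_antisymm (iSup_le fun z => EReal.coe_le_coe_iff.2 ?_) (coe_sub_le_fenchel f g x)
  have := hg z
  rw [inner_sub_right] at this
  linarith

theorem HolderSmooth.inner_le {n : ℕ} {L η : ℝ} {f : EuclideanSpace ℝ (Fin n) → ℝ}
    (hf : HolderSmooth L η f) {x x' g g' : EuclideanSpace ℝ (Fin n)}
    (hg : g ∈ SubdiffAt f x) (hg' : g' ∈ SubdiffAt f x') (v : EuclideanSpace ℝ (Fin n)) :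
    ⟪g', v⟫ ≤ ⟪g, v⟫ + L * ‖x' - x‖ ^ η * ‖v‖ := by
  have := (real_inner_le_norm (g' - g) v).trans
    (mul_le_mul_of_nonneg_right (hf x' x g' g hg' hg) (norm_nonneg v))
  rw [inner_sub_left] at this
  linarith

theorem image_le_of_sub_le_mul_deriv_boundary {φ B B' : ℝ → ℝ} {a b : ℝ}
    (hφ : ContinuousOn φ (Icc a b)) (hB : ∀ t ∈ Icc a b, HasDerivAt B (B' t) t)
    (hB' : ContinuousOn B' (Icc a b)) (ha : φ a ≤ B a)
    (hstep : ∀ t ∈ Ico a b, ∀ z ∈ Ioc t b, φ z - φ t ≤ (z - t) * B' z) :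
    ∀ ⦃t⦄, t ∈ Icc a b → φ t ≤ B t := by
  refine image_le_of_liminf_slope_right_le_deriv_boundary hφ ha
    (fun t ht => (hB t ht).continuousAt.continuousWithinAt)
    (fun t ht => (hB t (Ico_subset_Icc_self ht)).hasDerivWithinAt) fun t ht r hr => ?_
  have hcont : ContinuousWithinAt B' (Ioc t b) t :=
    (hB' t (Ico_subset_Icc_self ht)).mono (Ioc_subset_Icc_self.trans (Icc_subset_Icc_left ht.1))
  rw [ContinuousWithinAt, nhdsWithin_Ioc_eq_nhdsGT ht.2] at hcont
  refine Eventually.frequently ?_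
  filter_upwards [hcont (Iio_mem_nhds hr), Ioc_mem_nhdsGT ht.2] with z hzr hz
  rw [slope_def_field, div_lt_iff₀ (sub_pos.2 hz.1)]
  nlinarith [hstep t ht z hz, sub_pos.2 hz.1, show B' z < r from hzr]

theorem HolderSmooth.le_add_inner_add_rpow {n : ℕ} {L η : ℝ} {f : EuclideanSpace ℝ (Fin n) → ℝ}
    (hf : HolderSmooth L η f) (hconv : ConvexOn ℝ univ f) (hη : 0 < η)
    {x g : EuclideanSpace ℝ (Fin n)} (hg : g ∈ SubdiffAt f x) (y : EuclideanSpace ℝ (Fin n)) :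
    f y ≤ f x + ⟪g, y - x⟫ + L / (η + 1) * ‖y - x‖ ^ (η + 1) := by
  set d := y - x
  have hcont : Continuous f := continuousOn_univ.1 (hconv.continuousOn isOpen_univ)
  have key := image_le_of_sub_le_mul_deriv_boundary (φ := fun t => f (x + t • d))
    (B := fun t => f x + t * ⟪g, d⟫ + L / (η + 1) * ‖d‖ ^ (η + 1) * t ^ (η + 1))
    (B' := fun t => ⟪g, d⟫ + L * ‖d‖ ^ (η + 1) * t ^ η) (a := 0) (b := 1)
    (hcont.comp (by fun_prop)).continuousOn ?deriv
    (continuous_const.add (continuous_const.mul (Real.continuous_rpow_const hη.le))).continuousOn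
    (by simp [Real.zero_rpow (by positivity : η + 1 ≠ 0)]) ?step (right_mem_Icc.2 zero_le_one)
  · simpa [d] using key
  case deriv =>
    intro t _
    have := (((hasDerivAt_id t).mul_const ⟪g, d⟫).const_add (f x)).add
      ((Real.hasDerivAt_rpow_const (Or.inr (by linarith : 1 ≤ η + 1))).const_mul
        (L / (η + 1) * ‖d‖ ^ (η + 1)))
    exact this.congr_deriv (by rw [add_sub_cancel_right]; field_simp)
  case step =>
    rintro t ⟨ht0, -⟩ z ⟨htz, -⟩
    obtain ⟨G, hG⟩ := subdiffAt_nonempty hconv (x + z • d)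
    have hsupp := hG (x + t • d)
    rw [show x + t • d - (x + z • d) = (t - z) • d by rw [sub_smul]; abel,
      real_inner_smul_right] at hsupp
    have hslope := hf.inner_le hg hG d
    rw [add_sub_cancel_left, norm_smul, Real.norm_of_nonneg (by linarith),
      Real.mul_rpow (by linarith) (norm_nonneg d), mul_assoc, mul_assoc,
      ← Real.rpow_add_one' (norm_nonneg d) (by positivity)] at hslope
    nlinarith [mul_le_mul_of_nonneg_left hslope (sub_nonneg.2 htz.le)]

theorem exists_inner_sub_rpow_eq {E : Type*} [NormedAddCommGroup E] [InnerProductSpace ℝ E]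
    {L η : ℝ} (hL : 0 < L) (hη : 0 < η) (w : E) :
    ∃ v : E, ⟪w, v⟫ - L / (η + 1) * ‖v‖ ^ (η + 1)
      = η / ((η + 1) * L ^ (1 / η)) * ‖w‖ ^ ((η + 1) / η) := by
  rcases eq_or_ne w 0 with rfl | hw
  · exact ⟨0, by simp [Real.zero_rpow (by positivity : η + 1 ≠ 0),
      Real.zero_rpow (by positivity : (η + 1) / η ≠ 0)]⟩
  have hr : 0 < ‖w‖ := norm_pos_iff.2 hw
  -- the maximiser is `v = s • (w / ‖w‖)` with `s ^ η = ‖w‖ / L`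
  set s := (‖w‖ / L) ^ (1 / η) with hs_def
  have hs : s ^ η = ‖w‖ / L := by
    rw [hs_def, one_div, Real.rpow_inv_rpow (by positivity) hη.ne']
  have hsr : ‖w‖ ^ ((η + 1) / η) = s * ‖w‖ * L ^ (1 / η) := by
    rw [hs_def, Real.div_rpow hr.le hL.le, show (η + 1) / η = 1 / η + 1 by field_simp; ring,
      Real.rpow_add_one hr.ne']
    field_simp
  refine ⟨(s / ‖w‖) • w, ?_⟩
  have hnorm : ‖(s / ‖w‖) • w‖ = s := by
    rw [norm_smul, Real.norm_of_nonneg (by positivity)]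
    field_simp
  rw [real_inner_smul_right, real_inner_self_eq_norm_sq, hnorm, Real.rpow_add_one (by positivity),
    hs, hsr]
  field_simp
  ring

theorem fenchel_dual_lower_bound_general {n : ℕ} (f : EuclideanSpace ℝ (Fin n) → ℝ) (L η : ℝ)
    (hconv : ConvexOn ℝ Set.univ f)
    (hL : 0 < L) (hη0 : 0 < η)
    (hsmooth : HolderSmooth L η f)
    (x g : EuclideanSpace ℝ (Fin n)) (hg : g ∈ SubdiffAt f x) :
    fenchel f g = (((inner ℝ g x : ℝ) - f x : ℝ) : EReal) ∧
    ∀ g' : EuclideanSpace ℝ (Fin n),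
      ((((inner ℝ g x : ℝ) - f x) + (inner ℝ x (g' - g) : ℝ)
          + (η / ((η + 1) * L ^ (1 / η))) * ‖g' - g‖ ^ ((η + 1) / η) : ℝ) : EReal)
        ≤ fenchel f g' := by
  refine ⟨fenchel_eq_of_mem_subdiffAt hg, fun g' => ?_⟩
  obtain ⟨v, hv⟩ := exists_inner_sub_rpow_eq hL hη0 (g' - g)
  have hdesc := hsmooth.le_add_inner_add_rpow hconv hη0 hg (x + v)
  refine le_trans (EReal.coe_le_coe_iff.2 ?_) (coe_sub_le_fenchel f g' (x + v))
  rw [add_sub_cancel_left] at hdesc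
  have hinner : ⟪g', x + v⟫ = ⟪g, x⟫ + ⟪x, g' - g⟫ + ⟪g, v⟫ + ⟪g' - g, v⟫ := by
    rw [inner_add_right, inner_sub_left, inner_sub_right, real_inner_comm x g', real_inner_comm x g]
    ring
  linarith

/-- dual uniform-convexity lower bound on the Fenchel conjugate. -/
theorem fenchel_dual_lower_bound {n : ℕ} (f : EuclideanSpace ℝ (Fin n) → ℝ) (L η : ℝ)
    (hconv : ConvexOn ℝ Set.univ f)
    (hL : 0 < L) (hη0 : 0 < η) (hη1 : η ≤ 1)
    (hsmooth : HolderSmooth L η f)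
    (x g : EuclideanSpace ℝ (Fin n)) (hg : g ∈ SubdiffAt f x) :
    fenchel f g = (((inner ℝ g x : ℝ) - f x : ℝ) : EReal) ∧
    ∀ g' : EuclideanSpace ℝ (Fin n),
      ((((inner ℝ g x : ℝ) - f x) + (inner ℝ x (g' - g) : ℝ)
          + (η / ((η + 1) * L ^ (1 / η))) * ‖g' - g‖ ^ ((η + 1) / η) : ℝ) : EReal)
        ≤ fenchel f g' :=
  fenchel_dual_lower_bound_general f L η hconv hL hη0 hsmooth x g hg

end
end

section
/- Let f : ℝⁿ → ℝ be convex with minimizer x_*, suppose every subgradient g ∈ ∂f(x) at every x satisfies ‖g‖ ≤ L for some L > 0, suppose f has sharp growth f(x) ≥ f(x_*) + α‖x − x_*‖ for all x with α > 0, and suppose f(x_0) > f(x_*). Let (x_k) be generated by the Polyak subgradient method from x_0. Then there exists an index k ≤ 4L²/α² with f(x_k) − f(x_*) ≤ (f(x_0) − f(x_*))/2. -/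
/-!
Each Polyak step moves the iterate closer to the minimizer: the squared distance drops by at least
`(f xₖ - f xs)² / L²`. As long as the gap exceeds half the initial gap `D`, every step thus removes
`D² / (4L²)`, while sharp growth bounds the initial squared distance by `D² / α²`; hence this can
go on for fewer than `4L² / α²` steps.
-/

noncomputable section
open Classical

/-- `(x, g)` is a trajectory of the Polyak subgradient method for `f` with minimizer value
`f xs`: each `g k` is a subgradient at `x k` and the Polyak step is taken
(staying put when the subgradient is zero). -/
def PolyakSeq {n : ℕ} (f : EuclideanSpace ℝ (Fin n) → ℝ) (xs : EuclideanSpace ℝ (Fin n))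
    (x g : ℕ → EuclideanSpace ℝ (Fin n)) : Prop :=
  (∀ k, g k ∈ SubdiffAt f (x k)) ∧
  ∀ k, x (k + 1) =
    if g k = 0 then x k else x k - ((f (x k) - f xs) / ‖g k‖ ^ 2) • g k

open RealInnerProductSpace

section StepLength

variable {E : Type*} [NormedAddCommGroup E] [InnerProductSpace ℝ E]

theorem norm_sub_div_smul_sub_sq_le {x xs g : E} {Δ : ℝ} (hΔ : 0 ≤ Δ)
    (hinner : Δ ≤ ⟪g, x - xs⟫) :
    ‖x - (Δ / ‖g‖ ^ 2) • g - xs‖ ^ 2 ≤ ‖x - xs‖ ^ 2 - Δ ^ 2 / ‖g‖ ^ 2 := by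
  set ρ := Δ / ‖g‖ ^ 2
  have hρ : 0 ≤ ρ := by positivity
  have hρg : ρ ^ 2 * ‖g‖ ^ 2 = ρ * Δ := by
    rcases eq_or_ne g 0 with rfl | hg
    · simp [ρ]
    · simp only [ρ]
      field_simp
  calc ‖x - ρ • g - xs‖ ^ 2
      = ‖x - xs‖ ^ 2 - 2 * ρ * ⟪g, x - xs⟫ + ρ ^ 2 * ‖g‖ ^ 2 := by
        rw [sub_right_comm, norm_sub_sq_real, real_inner_smul_right, real_inner_comm, norm_smul,
          Real.norm_of_nonneg hρ]
        ring
    _ ≤ ‖x - xs‖ ^ 2 - 2 * ρ * Δ + ρ * Δ := by rw [hρg]; nlinarith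
    _ = ‖x - xs‖ ^ 2 - Δ ^ 2 / ‖g‖ ^ 2 := by ring

theorem norm_sub_div_smul_sub_sq_le_of_norm_le {x xs g : E} {Δ ε L : ℝ} (hε : 0 ≤ ε)
    (hεΔ : ε ≤ Δ) (hinner : Δ ≤ ⟪g, x - xs⟫) (hgL : ‖g‖ ≤ L) :
    ‖x - (Δ / ‖g‖ ^ 2) • g - xs‖ ^ 2 ≤ ‖x - xs‖ ^ 2 - (ε / L) ^ 2 := by
  have hΔ : 0 ≤ Δ := hε.trans hεΔ
  rcases eq_or_ne g 0 with rfl | hg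
  · obtain rfl : ε = 0 := by simp only [inner_zero_left] at hinner; linarith
    simp
  calc ‖x - (Δ / ‖g‖ ^ 2) • g - xs‖ ^ 2 ≤ ‖x - xs‖ ^ 2 - (Δ / ‖g‖) ^ 2 := by
        rw [div_pow]; exact norm_sub_div_smul_sub_sq_le hΔ hinner
    _ ≤ ‖x - xs‖ ^ 2 - (ε / L) ^ 2 := by
        have hg0 : 0 < ‖g‖ := norm_pos_iff.2 hg
        have hεL : 0 ≤ ε / L := div_nonneg hε (hg0.trans_le hgL).le
        gcongr

end StepLength

theorem le_sub_mul_of_forall_lt_succ_le_sub {d : ℕ → ℝ} {c : ℝ} {m : ℕ}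
    (hstep : ∀ k < m, d (k + 1) ≤ d k - c) : d m ≤ d 0 - m * c := by
  induction m with
  | zero => simp
  | succ m ih =>
    have := hstep m m.lt_succ_self
    have := ih fun k hk => hstep k (hk.trans m.lt_succ_self)
    push_cast
    linarith

theorem sub_le_inner_of_mem_subdiffAt {n : ℕ} {f : EuclideanSpace ℝ (Fin n) → ℝ}
    {z v : EuclideanSpace ℝ (Fin n)} (hv : v ∈ SubdiffAt f z) (y : EuclideanSpace ℝ (Fin n)) :
    f z - f y ≤ ⟪v, z - y⟫ := by
  have := hv y
  rw [← neg_sub, inner_neg_right] at this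
  linarith

namespace PolyakSeq

variable {n : ℕ} {f : EuclideanSpace ℝ (Fin n) → ℝ} {xs : EuclideanSpace ℝ (Fin n)}
  {x g : ℕ → EuclideanSpace ℝ (Fin n)}

-- No case split is needed: for `g k = 0` the step is `x k - (_ / 0) • 0 = x k`.
theorem succ_eq (h : PolyakSeq f xs x g) (k : ℕ) :
    x (k + 1) = x k - ((f (x k) - f xs) / ‖g k‖ ^ 2) • g k := by
  rw [h.2 k]
  split_ifs with hg <;> simp [hg]

theorem norm_succ_sub_sq_le (h : PolyakSeq f xs x g) {k : ℕ} {ε L : ℝ} (hε : 0 ≤ ε)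
    (hgap : ε ≤ f (x k) - f xs) (hgL : ‖g k‖ ≤ L) :
    ‖x (k + 1) - xs‖ ^ 2 ≤ ‖x k - xs‖ ^ 2 - (ε / L) ^ 2 := by
  rw [h.succ_eq]
  exact norm_sub_div_smul_sub_sq_le_of_norm_le hε hgap
    (sub_le_inner_of_mem_subdiffAt (h.1 k) xs) hgL

theorem mul_sq_div_le_norm_sub_sq (h : PolyakSeq f xs x g) {m : ℕ} {ε L : ℝ} (hε : 0 ≤ ε)
    (hgap : ∀ k < m, ε ≤ f (x k) - f xs) (hgL : ∀ k < m, ‖g k‖ ≤ L) :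
    m * (ε / L) ^ 2 ≤ ‖x 0 - xs‖ ^ 2 := by
  have := le_sub_mul_of_forall_lt_succ_le_sub (d := fun k ↦ ‖x k - xs‖ ^ 2)
    fun k hk ↦ h.norm_succ_sub_sq_le hε (hgap k hk) (hgL k hk)
  have := sq_nonneg ‖x m - xs‖
  linarith

end PolyakSeq

theorem polyak_sharp_halving_general {n : ℕ} (f : EuclideanSpace ℝ (Fin n) → ℝ) (L α : ℝ)
    (xs : EuclideanSpace ℝ (Fin n)) (x g : ℕ → EuclideanSpace ℝ (Fin n))
    (hL : 0 < L)
    (hgL : ∀ (z v : EuclideanSpace ℝ (Fin n)), v ∈ SubdiffAt f z → ‖v‖ ≤ L)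
    (hα : 0 < α)
    (hsharp : ∀ y, f xs + α * ‖y - xs‖ ≤ f y)
    (hgap : f xs < f (x 0))
    (hseq : PolyakSeq f xs x g) :
    ∃ k : ℕ, (k : ℝ) ≤ 4 * L ^ 2 / α ^ 2 ∧ f (x k) - f xs ≤ (f (x 0) - f xs) / 2 := by
  by_contra! hfar
  set D := f (x 0) - f xs
  set m := ⌊4 * L ^ 2 / α ^ 2⌋₊ + 1
  have hD : 0 < D := sub_pos.2 hgap
  have hsteps : m * (D / 2 / L) ^ 2 ≤ ‖x 0 - xs‖ ^ 2 :=
    hseq.mul_sq_div_le_norm_sub_sq (by positivity)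
      (fun k hk ↦ (hfar k ((Nat.cast_le.2 (Nat.lt_succ_iff.1 hk)).trans
        (Nat.floor_le (by positivity)))).le)
      (fun k _ ↦ hgL _ _ (hseq.1 k))
  have hdist : ‖x 0 - xs‖ ≤ D / α := by
    rw [le_div_iff₀ hα]
    linarith [hsharp (x 0)]
  have hm : (m : ℝ) ≤ 4 * L ^ 2 / α ^ 2 :=
    calc (m : ℝ) ≤ (D / α) ^ 2 / (D / 2 / L) ^ 2 :=
          (le_div_iff₀ (by positivity)).2 (hsteps.trans (by gcongr))
      _ = 4 * L ^ 2 / α ^ 2 := by field_simp; ring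
  push_cast [m] at hm
  exact (Nat.lt_floor_add_one _).not_ge hm

/-- under sharp growth, the Polyak subgradient method halves the objective gap
within 4L²/α² iterations. -/
theorem polyak_sharp_halving {n : ℕ} (f : EuclideanSpace ℝ (Fin n) → ℝ) (L α : ℝ)
    (xs : EuclideanSpace ℝ (Fin n)) (x g : ℕ → EuclideanSpace ℝ (Fin n))
    (hconv : ConvexOn ℝ Set.univ f)
    (hmin : ∀ y, f xs ≤ f y)
    (hL : 0 < L)
    (hgL : ∀ (z v : EuclideanSpace ℝ (Fin n)), v ∈ SubdiffAt f z → ‖v‖ ≤ L)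
    (hα : 0 < α)
    (hsharp : ∀ y, f xs + α * ‖y - xs‖ ≤ f y)
    (hgap : f xs < f (x 0))
    (hseq : PolyakSeq f xs x g) :
    ∃ k : ℕ, (k : ℝ) ≤ 4 * L ^ 2 / α ^ 2 ∧ f (x k) - f xs ≤ (f (x 0) - f xs) / 2 :=
  polyak_sharp_halving_general f L α xs x g hL hgL hα hsharp hgap hseq

end
end
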